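/- arXiv:1310.7379 — 5 statements merged into one kernel-verified Lean document; each statement's English description precedes it below -/
import Mathlib

section
/- Let (W,S) be a Coxeter system with length function ℓ and Bruhat order ≤. Let x, y ∈ W and s, t ∈ S be such that y = s·x·t and ℓ(x) = ℓ(y). Then for every x' ∈ W with x' ≤ x, either x' ≤ y, or both s·x'·t ≤ y and ℓ(s·x'·t) ≤ ℓ(x'). -/
/-- The Bruhat order on a Coxeter group: `x ≤ y` iff some reduced expression of `y`
contains a subword that is a reduced expression of `x`. -/
def CoxeterSystem.BruhatLE {B : Type*} {W : Type*} [Group W] {M : CoxeterMatrix B}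
    (cs : CoxeterSystem M W) (x y : W) : Prop :=
  ∃ ω : List B, cs.IsReduced ω ∧ cs.wordProd ω = y ∧
    ∃ ω' : List B, ω'.Sublist ω ∧ cs.IsReduced ω' ∧ cs.wordProd ω' = x

/-!
If `ℓ(xt) < ℓ(sxt)`, then `x' ≤ x` gives either `x' ≤ xt ≤ sxt = y`, or `x't < x'` and
`x't ≤ xt`; lifting the latter by `s` gives `sx't ≤ sxt = y` and `ℓ(sx't) ≤ ℓ(x't) + 1 = ℓ(x')`.
Otherwise `ℓ(xt) > ℓ(x)`, and then `ℓ(sx) < ℓ(x) = ℓ(sxt)` unless `y = x`, since `sx > x` and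
`xt > x` force `sxt = x` or `ℓ(sxt) = ℓ(x) + 2`; the mirror argument applies.

These steps need the subword property: if `v ≤ w`, then *every* reduced word of `w` contains a
reduced subword for `v`. It comes from comparing the subword definition with the chain order
generated by `u < ut` (`t` a reflection, `ℓ(u) < ℓ(ut)`), using the strong exchange condition, which
in turn comes from Tits' parity representation of `W` on `W × ZMod 2`.
-/

open scoped List
open Relation

namespace CoxeterSystem

variable {B W : Type*} [Group W] {M : CoxeterMatrix B} (cs : CoxeterSystem M W)

local prefix:100 "s" => cs.simple
local prefix:100 "π" => cs.wordProd
local prefix:100 "ℓ" => cs.length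
local prefix:100 "ris " => cs.rightInvSeq

theorem mul_simple_eq_iff (i : B) (w v : W) : w * s i = v ↔ w = v * s i := by
  rw [← mul_inv_eq_iff_eq_mul, inv_simple]

theorem simple_mul_eq_iff (i : B) (w v : W) : s i * w = v ↔ w = s i * v := by
  rw [← inv_mul_eq_iff_eq_mul, inv_simple]

theorem simple_mul_mul_simple_eq_simple_iff (i : B) (t : W) : s i * t * s i = s i ↔ t = s i := by
  rw [mul_simple_eq_iff, simple_mul_eq_iff, simple_mul_simple_self, mul_one]

section ParityRepresentation

variable [DecidableEq W]

def parityPerm (i : B) : Equiv.Perm (W × ZMod 2) :=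
  Function.Involutive.toPerm (fun p ↦ (s i * p.1 * s i, p.2 + if p.1 = s i then 1 else 0)) <| by
    rintro ⟨t, ε⟩
    refine Prod.ext ?_ ?_ <;> dsimp only
    · simp [mul_assoc, simple_mul_simple_cancel_left]
    · simp only [simple_mul_mul_simple_eq_simple_iff, add_assoc, CharTwo.add_self_eq_zero, add_zero]

theorem parityPerm_apply (i : B) (t : W) (ε : ZMod 2) :
    cs.parityPerm i (t, ε) = (s i * t * s i, ε + if t = s i then 1 else 0) := rfl

theorem parityPerm_mul_parityPerm_pow_apply (i j : B) (a : ℕ) (t : W) (ε : ZMod 2) :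
    ((cs.parityPerm i * cs.parityPerm j) ^ a) (t, ε) =
      ((s i * s j) ^ a * t * ((s i * s j) ^ a)⁻¹,
        ε + ∑ m ∈ Finset.range (2 * a), if (s i * s j) ^ m * t = s j then 1 else 0) := by
  induction a generalizing t ε with
  | zero => simp
  | succ a ih =>
    have hj : s j * t * s j = s i ↔ s i * s j * t = s j := by
      rw [mul_simple_eq_iff, simple_mul_eq_iff, mul_assoc, simple_mul_eq_iff, simple_mul_eq_iff]
    have hconj : s i * (s j * t * s j) * s i = (s i * s j) * t * (s i * s j)⁻¹ := by
      simp [mul_assoc, inv_simple]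
    have hinv : s j * (s i * s j) = (s i * s j)⁻¹ * s j := by
      simp [mul_assoc, inv_simple]
    rw [pow_succ, Equiv.Perm.mul_apply, Equiv.Perm.mul_apply, parityPerm_apply, parityPerm_apply,
      hconj, ih]
    generalize s i * s j = g at hj hinv ⊢
    -- `s j` conjugates `g` to `g⁻¹`, which turns the new conditions into `g ^ (m + 2) * t = s j`
    have hshift (m : ℕ) : g ^ m * (g * t * g⁻¹) = s j ↔ g ^ (m + 1 + 1) * t = s j := by
      rw [show g ^ m * (g * t * g⁻¹) = g ^ (m + 1) * t * g⁻¹ by group, mul_inv_eq_iff_eq_mul, hinv,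
        eq_inv_mul_iff_mul_eq, pow_succ' _ (m + 1), mul_assoc]
    refine Prod.ext (by group) ?_
    rw [show 2 * (a + 1) = 2 * a + 1 + 1 by ring, Finset.sum_range_succ', Finset.sum_range_succ']
    simp only [hj, hshift, pow_zero, zero_add, pow_one, one_mul]
    abel

theorem isLiftable_parityPerm : M.IsLiftable cs.parityPerm := by
  intro i j
  ext ⟨t, ε⟩ : 1
  rw [parityPerm_mul_parityPerm_pow_apply, simple_mul_simple_pow, two_mul, Finset.sum_range_add]
  simp [pow_add, simple_mul_simple_pow, CharTwo.add_self_eq_zero]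

def parityRep : W →* Equiv.Perm (W × ZMod 2) :=
  cs.lift ⟨cs.parityPerm, cs.isLiftable_parityPerm⟩

theorem parityRep_wordProd (ω : List B) (t : W) (ε : ZMod 2) :
    cs.parityRep (π ω) (t, ε) = (π ω * t * (π ω)⁻¹, ε + (ris ω).count t) := by
  induction ω generalizing ε with
  | nil => simp [rightInvSeq]
  | cons i ω ih =>
    rw [wordProd_cons, map_mul, Equiv.Perm.mul_apply, ih, parityRep, lift_apply_simple,
      parityPerm_apply, rightInvSeq, List.count_cons]
    have hcond : π ω * t * (π ω)⁻¹ = s i ↔ (π ω)⁻¹ * s i * π ω = t := by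
      constructor <;> intro h <;> simp [← h, mul_assoc]
    refine Prod.ext (by simp [mul_assoc, inv_simple]) ?_
    simp only [hcond, beq_iff_eq]
    push_cast
    ring

def inversionParity (w t : W) : ZMod 2 := (cs.parityRep w (t, 0)).2

theorem inversionParity_wordProd (ω : List B) (t : W) :
    cs.inversionParity (π ω) t = (ris ω).count t := by
  simp [inversionParity, parityRep_wordProd]

theorem parityRep_apply (w t : W) (ε : ZMod 2) :
    cs.parityRep w (t, ε) = (w * t * w⁻¹, ε + cs.inversionParity w t) := by
  obtain ⟨ω, rfl⟩ := cs.wordProd_surjective w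
  rw [parityRep_wordProd, inversionParity_wordProd]

theorem inversionParity_mul (w v t : W) :
    cs.inversionParity (w * v) t = cs.inversionParity v t + cs.inversionParity w (v * t * v⁻¹) := by
  change (cs.parityRep (w * v) (t, 0)).2 = _
  rw [map_mul, Equiv.Perm.mul_apply, parityRep_apply, parityRep_apply, zero_add]

theorem inversionParity_one (t : W) : cs.inversionParity 1 t = 0 := by
  simp [inversionParity]

theorem inversionParity_simple (i : B) (t : W) :
    cs.inversionParity (s i) t = if t = s i then 1 else 0 := by
  simp [inversionParity, parityRep, lift_apply_simple, parityPerm_apply]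

theorem inversionParity_self {t : W} (ht : cs.IsReflection t) : cs.inversionParity t t = 1 := by
  obtain ⟨u, i, rfl⟩ := ht
  have h := cs.inversionParity_mul u u⁻¹ (u * s i * u⁻¹)
  have hconj : u⁻¹ * (u * s i * u⁻¹) * u⁻¹⁻¹ = s i := by group
  rw [mul_inv_cancel, inversionParity_one, hconj] at h
  rw [inversionParity_mul cs (u * s i), hconj, inversionParity_mul, inversionParity_simple,
    if_pos rfl, simple_mul_simple_self, one_mul, inv_simple]
  linear_combination -h

end ParityRepresentation

theorem mem_rightInvSeq_of_isRightInversion (ω : List B) {t : W}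
    (ht : cs.IsRightInversion (π ω) t) : t ∈ ris ω := by
  classical
  obtain ⟨htr, hlt⟩ := ht
  obtain ⟨α, hα, hαω⟩ := cs.exists_isReduced (π ω * t)
  have hω : π ω = π α * t := by rw [← hαω, mul_assoc, htr.mul_self, mul_one]
  have hα_not : t ∉ ris α := fun hmem ↦ by
    have := (cs.isRightInversion_of_mem_rightInvSeq hα hmem).2
    rw [← hω, ← hαω] at this
    exact lt_asymm hlt this
  -- mod 2, `count t (ris ω) = η (π α * t) t = η t t + η (π α) t = 1 + 0`, `η = inversionParity`
  have hpar := cs.inversionParity_mul (π α) t t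
  rw [inversionParity_self cs htr, mul_inv_cancel_right, ← hω, inversionParity_wordProd,
    inversionParity_wordProd, List.count_eq_zero_of_not_mem hα_not] at hpar
  by_contra hmem
  rw [List.count_eq_zero_of_not_mem hmem] at hpar
  simp at hpar

theorem exists_wordProd_eraseIdx_eq_mul_of_isRightInversion (ω : List B) {t : W}
    (ht : cs.IsRightInversion (π ω) t) : ∃ j < ω.length, π (ω.eraseIdx j) = π ω * t := by
  obtain ⟨j, hj, rfl⟩ := List.getElem_of_mem (cs.mem_rightInvSeq_of_isRightInversion ω ht)
  rw [length_rightInvSeq] at hj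
  refine ⟨j, hj, ?_⟩
  rw [← wordProd_mul_getD_rightInvSeq, List.getD_eq_getElem]

theorem simple_mul_mul_simple_eq_of_length_le {x : W} {i j : B} (hi : ℓ x < ℓ (s i * x))
    (hj : ℓ x < ℓ (x * s j)) (h : ℓ (s i * x * s j) ≤ ℓ x) : s i * x * s j = x := by
  obtain ⟨ω, hω, rfl⟩ := cs.exists_isReduced x
  obtain ⟨k, hk, hkx⟩ := cs.exists_wordProd_eraseIdx_eq_mul_of_isRightInversion (i :: ω)
    ⟨cs.isReflection_simple j, by rw [wordProd_cons]; omega⟩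
  rw [wordProd_cons] at hkx
  cases k with
  | zero => rwa [List.eraseIdx_cons_zero, eq_comm] at hkx
  | succ k =>
    rw [List.eraseIdx_cons_succ, wordProd_cons, mul_assoc, mul_right_inj] at hkx
    have := cs.length_wordProd_le (ω.eraseIdx k)
    have := List.length_eraseIdx_add_one (Nat.lt_of_succ_lt_succ hk)
    have := hω.eq
    rw [hkx] at *
    omega

theorem isReduced_append_singleton_iff (ω : List B) (i : B) :
    cs.IsReduced (ω ++ [i]) ↔ cs.IsReduced ω ∧ ℓ (π ω) < ℓ (π ω * s i) := by
  have := cs.length_mul_simple (π ω) i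
  have := cs.length_wordProd_le ω
  simp only [IsReduced, wordProd_append, wordProd_singleton, List.length_append,
    List.length_singleton]
  omega

theorem wordProd_append_singleton_of_mul_simple_eq {ω : List B} {w : W} {i : B}
    (h : w * s i = π ω) : π (ω ++ [i]) = w := by
  rw [wordProd_append, wordProd_singleton, ← h, simple_mul_simple_cancel_right]

theorem exists_isReduced_sublist (ω : List B) :
    ∃ τ, τ <+ ω ∧ cs.IsReduced τ ∧ π τ = π ω := by
  induction ω using List.reverseRecOn with
  | nil => exact ⟨[], .slnil, by simp [IsReduced], rfl⟩
  | append_singleton ω i ih =>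
    obtain ⟨τ, hτω, hτ, hτπ⟩ := ih
    rw [wordProd_append, wordProd_singleton, ← hτπ]
    rcases lt_or_gt_of_ne (cs.length_mul_simple_ne (π τ) i) with hlt | hgt
    · obtain ⟨j, hj, hτj⟩ := cs.exists_wordProd_eraseIdx_eq_mul_of_isRightInversion τ
        ⟨cs.isReflection_simple i, hlt⟩
      refine ⟨τ.eraseIdx j, (τ.eraseIdx_sublist j).trans (hτω.trans (List.sublist_append_left _ _)),
        ?_, hτj⟩
      have := cs.length_mul_simple (π τ) i
      have := List.length_eraseIdx_add_one hj
      have := hτ.eq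
      rw [IsReduced, hτj]
      omega
    · exact ⟨τ ++ [i], hτω.append_right [i], (cs.isReduced_append_singleton_iff τ i).2 ⟨hτ, hgt⟩,
        by rw [wordProd_append, wordProd_singleton]⟩

/-- `ReflTransGen cs.BruhatStep` is the usual definition of the Bruhat order by chains. -/
def BruhatStep (u w : W) : Prop := ℓ u < ℓ w ∧ cs.IsReflection (w⁻¹ * u)

theorem bruhatStep_mul_simple {w : W} {i : B} (h : ℓ w < ℓ (w * s i)) :
    cs.BruhatStep w (w * s i) :=
  ⟨h, by simpa using cs.isReflection_simple i⟩

theorem exists_sublist_of_bruhatStep {u w : W} (h : cs.BruhatStep u w) {ω : List B}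
    (hω : π ω = w) : ∃ τ, τ <+ ω ∧ cs.IsReduced τ ∧ π τ = u := by
  obtain ⟨hlt, ht⟩ := h
  obtain ⟨j, -, hj⟩ := cs.exists_wordProd_eraseIdx_eq_mul_of_isRightInversion ω
    ⟨ht, by rwa [hω, mul_inv_cancel_left]⟩
  obtain ⟨τ, hτ, hτred, hτπ⟩ := cs.exists_isReduced_sublist (ω.eraseIdx j)
  exact ⟨τ, hτ.trans (ω.eraseIdx_sublist j), hτred, by rw [hτπ, hj, hω, mul_inv_cancel_left]⟩

theorem exists_sublist_of_reflTransGen_bruhatStep {u w : W} (h : ReflTransGen cs.BruhatStep u w)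
    {ω : List B} (hω : π ω = w) : ∃ τ, τ <+ ω ∧ cs.IsReduced τ ∧ π τ = u := by
  induction h generalizing ω with
  | refl =>
    obtain ⟨τ, hτω, hτ, hτπ⟩ := cs.exists_isReduced_sublist ω
    exact ⟨τ, hτω, hτ, hτπ.trans hω⟩
  | tail _ hstep ih =>
    obtain ⟨τ, hτω, -, hτπ⟩ := cs.exists_sublist_of_bruhatStep hstep hω
    obtain ⟨τ', hτ'τ, hτ', hτ'π⟩ := ih hτπ
    exact ⟨τ', hτ'τ.trans hτω, hτ', hτ'π⟩

def SubwordChainBelow (n : ℕ) : Prop :=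
  ∀ ω : List B, cs.IsReduced ω → ω.length < n →
    ∀ τ, τ <+ ω → ReflTransGen cs.BruhatStep (π τ) (π ω)

theorem reflTransGen_mul_simple_of_bruhatStep {n : ℕ} (hn : cs.SubwordChainBelow n) {u w : W}
    {i : B} (h : cs.BruhatStep u w) (hwn : ℓ w ≤ n) (hw : ℓ (w * s i) < ℓ w) :
    ReflTransGen cs.BruhatStep (u * s i) w := by
  obtain ⟨ρ, hρ, hρw⟩ := cs.exists_isReduced (w * s i)
  have hρi := cs.wordProd_append_singleton_of_mul_simple_eq hρw
  obtain ⟨j, hj, hju⟩ := cs.exists_wordProd_eraseIdx_eq_mul_of_isRightInversion (ρ ++ [i])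
    ⟨h.2, by rw [hρi, mul_inv_cancel_left]; exact h.1⟩
  rw [hρi, mul_inv_cancel_left] at hju
  rw [List.length_append, List.length_singleton] at hj
  rcases Nat.lt_succ_iff_lt_or_eq.1 hj with hj | rfl
  · rw [List.eraseIdx_append_of_lt_length hj, wordProd_append, wordProd_singleton] at hju
    rw [← hju, simple_mul_simple_cancel_right]
    refine .tail (hn ρ hρ (by have := hρ.eq; rw [← hρw] at this; omega) _
      (ρ.eraseIdx_sublist j)) ?_
    simpa [← hρw] using cs.bruhatStep_mul_simple (w := w * s i) (i := i) (by simpa using hw)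
  · rw [List.eraseIdx_append_of_length_le le_rfl, Nat.sub_self, List.eraseIdx_cons_zero,
      List.append_nil, ← hρw] at hju
    rw [← hju, simple_mul_simple_cancel_right]

noncomputable def maxMulSimple (w : W) (i : B) : W :=
  open scoped Classical in if ℓ (w * s i) < ℓ w then w else w * s i

theorem maxMulSimple_of_lt {w : W} {i : B} (h : ℓ (w * s i) < ℓ w) : cs.maxMulSimple w i = w :=
  if_pos h

theorem maxMulSimple_of_gt {w : W} {i : B} (h : ℓ w < ℓ (w * s i)) :
    cs.maxMulSimple w i = w * s i :=
  if_neg h.not_gt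

theorem reflTransGen_mul_simple_maxMulSimple (w : W) (i : B) :
    ReflTransGen cs.BruhatStep (w * s i) (cs.maxMulSimple w i) := by
  rcases lt_or_gt_of_ne (cs.length_mul_simple_ne w i) with h | h
  · rw [maxMulSimple_of_lt cs h]
    simpa using ReflTransGen.single
      (cs.bruhatStep_mul_simple (w := w * s i) (i := i) (by simpa using h))
  · rw [maxMulSimple_of_gt cs h]

theorem reflTransGen_maxMulSimple_of_bruhatStep {n : ℕ} (hn : cs.SubwordChainBelow n) {u w : W}
    (h : cs.BruhatStep u w) (hwn : ℓ w ≤ n) (i : B) :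
    ReflTransGen cs.BruhatStep (cs.maxMulSimple u i) (cs.maxMulSimple w i) := by
  rcases lt_or_gt_of_ne (cs.length_mul_simple_ne u i) with hu | hu <;>
    rcases lt_or_gt_of_ne (cs.length_mul_simple_ne w i) with hw | hw
  · rw [maxMulSimple_of_lt cs hu, maxMulSimple_of_lt cs hw]
    exact .single h
  · rw [maxMulSimple_of_lt cs hu, maxMulSimple_of_gt cs hw]
    exact .tail (.single h) (cs.bruhatStep_mul_simple hw)
  · rw [maxMulSimple_of_gt cs hu, maxMulSimple_of_lt cs hw]
    exact cs.reflTransGen_mul_simple_of_bruhatStep hn h hwn hw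
  · rw [maxMulSimple_of_gt cs hu, maxMulSimple_of_gt cs hw]
    have := cs.length_mul_simple u i
    have := cs.length_mul_simple w i
    refine .single ⟨by have := h.1; omega, ?_⟩
    simpa [mul_assoc, inv_simple] using h.2.conj (s i)

theorem reflTransGen_maxMulSimple {n : ℕ} (hn : cs.SubwordChainBelow n) {u w : W}
    (h : ReflTransGen cs.BruhatStep u w) (hwn : ℓ w ≤ n) (i : B) :
    ReflTransGen cs.BruhatStep (cs.maxMulSimple u i) (cs.maxMulSimple w i) := by
  induction h with
  | refl => exact .refl
  | tail _ hstep ih =>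
    exact (ih (hstep.1.le.trans hwn)).trans
      (cs.reflTransGen_maxMulSimple_of_bruhatStep hn hstep hwn i)

theorem subwordChainBelow (n : ℕ) : cs.SubwordChainBelow n := by
  induction n with
  | zero => exact fun ω _ hω ↦ absurd hω (Nat.not_lt_zero _)
  | succ n ih =>
    intro ω hω hωn τ hτω
    obtain rfl | ⟨ω, i, rfl⟩ := ω.eq_nil_or_concat'
    · rw [List.sublist_nil.1 hτω]
    obtain ⟨hω', hasc⟩ := (cs.isReduced_append_singleton_iff ω i).1 hω
    replace hωn : ω.length < n := by simpa using hωn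
    obtain ⟨τ, l, rfl, hτ, hl⟩ := List.sublist_append_iff.1 hτω
    rcases List.sublist_singleton.1 hl with rfl | rfl <;>
      simp only [List.append_nil, wordProd_append, wordProd_singleton]
    · exact (ih ω hω' hωn τ hτ).tail (cs.bruhatStep_mul_simple hasc)
    · rw [← maxMulSimple_of_gt cs hasc]
      exact (cs.reflTransGen_mul_simple_maxMulSimple _ i).trans
        (cs.reflTransGen_maxMulSimple ih (ih ω hω' hωn τ hτ) (hω'.eq ▸ hωn.le) i)

variable {cs}

theorem BruhatLE.exists_sublist {v w : W} (h : cs.BruhatLE v w) {ω : List B} (hω : π ω = w) :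
    ∃ τ, τ <+ ω ∧ cs.IsReduced τ ∧ π τ = v := by
  obtain ⟨ρ, hρ, rfl, τ, hτρ, -, rfl⟩ := h
  exact cs.exists_sublist_of_reflTransGen_bruhatStep
    (cs.subwordChainBelow (ρ.length + 1) ρ hρ ρ.length.lt_succ_self τ hτρ) hω

theorem BruhatLE.trans {u v w : W} (huv : cs.BruhatLE u v) (hvw : cs.BruhatLE v w) :
    cs.BruhatLE u w := by
  obtain ⟨ω, hω, rfl, τ, hτω, hτ, rfl⟩ := hvw
  obtain ⟨τ', hτ'τ, hτ', rfl⟩ := huv.exists_sublist rfl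
  exact ⟨ω, hω, rfl, τ', hτ'τ.trans hτω, hτ', rfl⟩

theorem BruhatLE.inv {v w : W} (h : cs.BruhatLE v w) : cs.BruhatLE v⁻¹ w⁻¹ := by
  obtain ⟨ω, hω, rfl, τ, hτω, hτ, rfl⟩ := h
  exact ⟨ω.reverse, hω.reverse, wordProd_reverse .., τ.reverse, hτω.reverse, hτ.reverse,
    wordProd_reverse ..⟩

theorem bruhatLE_mul_simple_of_lt {w : W} {i : B} (h : ℓ (w * s i) < ℓ w) :
    cs.BruhatLE (w * s i) w := by
  obtain ⟨ω, hω, hωw⟩ := cs.exists_isReduced (w * s i)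
  refine ⟨ω ++ [i], (cs.isReduced_append_singleton_iff ω i).2 ⟨hω, ?_⟩,
    cs.wordProd_append_singleton_of_mul_simple_eq hωw, ω, List.sublist_append_left _ _, hω,
    hωw.symm⟩
  rwa [← hωw, simple_mul_simple_cancel_right]

theorem bruhatLE_mul_simple_of_gt {w : W} {i : B} (h : ℓ w < ℓ (w * s i)) :
    cs.BruhatLE w (w * s i) := by
  simpa using bruhatLE_mul_simple_of_lt (cs := cs) (w := w * s i) (i := i) (by simpa using h)

theorem bruhatLE_simple_mul_of_gt {w : W} {i : B} (h : ℓ w < ℓ (s i * w)) :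
    cs.BruhatLE w (s i * w) := by
  simpa [inv_simple] using (bruhatLE_mul_simple_of_gt (w := w⁻¹) (i := i)
    (by simpa [← length_inv cs (s i * w), inv_simple] using h)).inv

theorem BruhatLE.mul_simple {v w : W} {i : B} (h : cs.BruhatLE v w) (hw : ℓ w < ℓ (w * s i)) :
    cs.BruhatLE (v * s i) (w * s i) := by
  rcases lt_or_gt_of_ne (cs.length_mul_simple_ne v i) with hv | hv
  · exact (bruhatLE_mul_simple_of_lt hv).trans (h.trans (bruhatLE_mul_simple_of_gt hw))
  obtain ⟨ω, hω, rfl⟩ := cs.exists_isReduced w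
  obtain ⟨τ, hτω, hτ, rfl⟩ := h.exists_sublist rfl
  exact ⟨ω ++ [i], (cs.isReduced_append_singleton_iff ω i).2 ⟨hω, hw⟩, by simp [wordProd_append],
    τ ++ [i], hτω.append_right [i], (cs.isReduced_append_singleton_iff τ i).2 ⟨hτ, hv⟩,
    by simp [wordProd_append]⟩

theorem BruhatLE.simple_mul {v w : W} {i : B} (h : cs.BruhatLE v w) (hw : ℓ w < ℓ (s i * w)) :
    cs.BruhatLE (s i * v) (s i * w) := by
  simpa [inv_simple] using (h.inv.mul_simple (i := i)
    (by simpa [← length_inv cs (s i * w), inv_simple] using hw)).inv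

theorem BruhatLE.le_mul_simple_or {v w : W} (h : cs.BruhatLE v w) (i : B) :
    cs.BruhatLE v (w * s i) ∨ cs.BruhatLE (v * s i) (w * s i) ∧ ℓ (v * s i) < ℓ v := by
  obtain ⟨ρ, hρ, hρw⟩ := cs.exists_isReduced (w * s i)
  obtain ⟨τ, hτρ, hτ, rfl⟩ :=
    h.exists_sublist (cs.wordProd_append_singleton_of_mul_simple_eq hρw)
  obtain ⟨τ, l, rfl, hτ', hl⟩ := List.sublist_append_iff.1 hτρ
  rcases List.sublist_singleton.1 hl with rfl | rfl
  · rw [List.append_nil] at hτ ⊢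
    exact .inl ⟨ρ, hρ, hρw.symm, τ, hτ', hτ, rfl⟩
  · obtain ⟨hτ, hτi⟩ := (cs.isReduced_append_singleton_iff τ i).1 hτ
    simp only [wordProd_append, wordProd_singleton, simple_mul_simple_cancel_right]
    exact .inr ⟨⟨ρ, hρ, hρw.symm, τ, hτ', hτ, rfl⟩, hτi⟩

theorem BruhatLE.le_simple_mul_or {v w : W} (h : cs.BruhatLE v w) (i : B) :
    cs.BruhatLE v (s i * w) ∨ cs.BruhatLE (s i * v) (s i * w) ∧ ℓ (s i * v) < ℓ v := by
  rcases h.inv.le_mul_simple_or i with h | ⟨h, hlt⟩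
  · exact .inl (by simpa [inv_simple] using h.inv)
  · exact .inr ⟨by simpa [inv_simple] using h.inv,
      by simpa [← length_inv cs (s i * v), inv_simple] using hlt⟩

theorem BruhatLE.le_or_of_length_mul_simple_lt {x x' : W} {i j : B} (h : cs.BruhatLE x' x)
    (hx : ℓ (x * s j) < ℓ (s i * x * s j)) :
    cs.BruhatLE x' (s i * x * s j) ∨
      cs.BruhatLE (s i * x' * s j) (s i * x * s j) ∧ ℓ (s i * x' * s j) ≤ ℓ x' := by
  rw [mul_assoc] at hx
  simp only [mul_assoc]
  rcases h.le_mul_simple_or j with h | ⟨h, hlt⟩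
  · exact .inl (h.trans (bruhatLE_simple_mul_of_gt hx))
  · have := cs.length_simple_mul (x' * s j) i
    exact .inr ⟨h.simple_mul hx, by omega⟩

theorem BruhatLE.le_or_of_length_simple_mul_lt {x x' : W} {i j : B} (h : cs.BruhatLE x' x)
    (hx : ℓ (s i * x) < ℓ (s i * x * s j)) :
    cs.BruhatLE x' (s i * x * s j) ∨
      cs.BruhatLE (s i * x' * s j) (s i * x * s j) ∧ ℓ (s i * x' * s j) ≤ ℓ x' := by
  rcases h.le_simple_mul_or i with h | ⟨h, hlt⟩
  · exact .inl (h.trans (bruhatLE_mul_simple_of_gt hx))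
  · have := cs.length_mul_simple (s i * x') j
    exact .inr ⟨h.mul_simple hx, by omega⟩

end CoxeterSystem

/-- Let `(W,S)` be a Coxeter system, `x y ∈ W` and `s, t ∈ S` with `y = s·x·t` and
`ℓ(x) = ℓ(y)`.  Then for every `x' ≤ x` (Bruhat order), either `x' ≤ y`, or both
`s·x'·t ≤ y` and `ℓ(s·x'·t) ≤ ℓ(x')`. -/
theorem stmt0 {B : Type*} {W : Type*} [Group W] {M : CoxeterMatrix B}
    (cs : CoxeterSystem M W) (x y : W) (s t : B)
    (hy : y = cs.simple s * x * cs.simple t)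
    (hlen : cs.length x = cs.length y)
    (x' : W) (hx' : cs.BruhatLE x' x) :
    cs.BruhatLE x' y ∨
      (cs.BruhatLE (cs.simple s * x' * cs.simple t) y ∧
        cs.length (cs.simple s * x' * cs.simple t) ≤ cs.length x') := by
  by_cases hyx : y = x
  · exact .inl (hyx ▸ hx')
  subst hy
  rcases lt_or_gt_of_ne (cs.length_mul_simple_ne x t) with hxt | hxt
  · exact hx'.le_or_of_length_mul_simple_lt (by omega)
  · have hsx : cs.length (cs.simple s * x) < cs.length x :=
      lt_of_le_of_ne (not_lt.1 fun hsx ↦ hyx (cs.simple_mul_mul_simple_eq_of_length_le hsx hxt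
        hlen.ge)) (cs.length_simple_mul_ne x s)
    exact hx'.le_or_of_length_simple_mul_lt (by omega)
end

section
/- Let n ≥ 1 and r ≥ 0 be integers with 2r + 1 ≤ n. In the symmetric group 𝔖_n, the (2r+1)-cycle σ_{2r+1} := (1, n, 2, n−1, 3, n−2, …, r, n−r+1, r+1) (so σ_{2r+1} maps 1 ↦ n, n ↦ 2, 2 ↦ n−1, …, n−r+1 ↦ r+1, r+1 ↦ 1, and fixes all other points) satisfies σ_{2r+1} = s₁ s₂ ⋯ s_r · w₀ · w_{I}, where I = {r+1, r+2, …, n−1−r}. -/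
lemma prod_map_swap_succ_apply (r x : ℕ) :
    ((List.range r).map fun i => Equiv.swap (i + 1) (i + 2)).prod x =
      if 1 ≤ x ∧ x ≤ r then x + 1 else if x = r + 1 then 1 else x := by
  induction r generalizing x with
  | zero =>
    simp only [List.range_zero, List.map_nil, List.prod_nil, Equiv.Perm.one_apply]
    split_ifs <;> omega
  | succ r ih =>
    rw [List.range_succ, List.map_append, List.prod_append]
    simp only [List.map_cons, List.map_nil, List.prod_cons, List.prod_nil, mul_one,
      Equiv.Perm.mul_apply, Equiv.swap_apply_def]
    split_ifs <;> rw [ih] <;> split_ifs <;> omega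

lemma reverse_mul_reverse_apply_eq_ite {n r : ℕ} {w₀ wI : Equiv.Perm ℕ}
    (hw₀ : ∀ i : ℕ, (1 ≤ i ∧ i ≤ n → w₀ i = n + 1 - i) ∧ (¬(1 ≤ i ∧ i ≤ n) → w₀ i = i))
    (hwI : ∀ j : ℕ, (r + 1 ≤ j ∧ j ≤ n - r → wI j = n + 1 - j) ∧
      (¬(r + 1 ≤ j ∧ j ≤ n - r) → wI j = j)) (x : ℕ) :
    w₀ (wI x) = if r + 1 ≤ x ∧ x ≤ n - r then x else if 1 ≤ x ∧ x ≤ n then n + 1 - x else x := by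
  by_cases hmid : r + 1 ≤ x ∧ x ≤ n - r
  · rw [(hwI x).1 hmid, (hw₀ _).1 (by omega), if_pos hmid]
    omega
  · rw [(hwI x).2 hmid, if_neg hmid]
    by_cases hx : 1 ≤ x ∧ x ≤ n
    · rw [(hw₀ x).1 hx, if_pos hx]
    · rw [(hw₀ x).2 hx, if_neg hx]

lemma cycle_apply_eq_ite {n r : ℕ} {σ : Equiv.Perm ℕ}
    (hσ₁ : ∀ i : ℕ, 1 ≤ i → i ≤ r → σ i = n + 1 - i)
    (hσ₂ : ∀ i : ℕ, 1 ≤ i → i ≤ r → σ (n + 1 - i) = i + 1)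
    (hσ₃ : σ (r + 1) = 1)
    (hσ₄ : ∀ i : ℕ, ¬(1 ≤ i ∧ i ≤ r + 1) → ¬(n + 1 - r ≤ i ∧ i ≤ n) → σ i = i) (x : ℕ) :
    σ x = if 1 ≤ x ∧ x ≤ r then n + 1 - x else if x = r + 1 then 1
      else if n + 1 - r ≤ x ∧ x ≤ n then n + 2 - x else x := by
  split_ifs with hlow hpivot hhigh
  · exact hσ₁ x hlow.1 hlow.2
  · rw [hpivot, hσ₃]
  · have hx : n + 1 - (n + 1 - x) = x := by omega
    rw [← hx, hσ₂ _ (by omega) (by omega)]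
    omega
  · exact hσ₄ x (by omega) hhigh

theorem stmt4_general (n r : ℕ) (hr : 2 * r + 1 ≤ n)
    (σ w₀ wI : Equiv.Perm ℕ)
    (hw₀ : ∀ i : ℕ, (1 ≤ i ∧ i ≤ n → w₀ i = n + 1 - i) ∧ (¬(1 ≤ i ∧ i ≤ n) → w₀ i = i))
    (hwI : ∀ j : ℕ, (r + 1 ≤ j ∧ j ≤ n - r → wI j = n + 1 - j) ∧
      (¬(r + 1 ≤ j ∧ j ≤ n - r) → wI j = j))
    (hσ₁ : ∀ i : ℕ, 1 ≤ i → i ≤ r → σ i = n + 1 - i)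
    (hσ₂ : ∀ i : ℕ, 1 ≤ i → i ≤ r → σ (n + 1 - i) = i + 1)
    (hσ₃ : σ (r + 1) = 1)
    (hσ₄ : ∀ i : ℕ, ¬(1 ≤ i ∧ i ≤ r + 1) → ¬(n + 1 - r ≤ i ∧ i ≤ n) → σ i = i) :
    σ = ((List.range r).map fun i => Equiv.swap (i + 1) (i + 2)).prod * w₀ * wI := by
  ext x
  rw [Equiv.Perm.mul_apply, Equiv.Perm.mul_apply, prod_map_swap_succ_apply,
    reverse_mul_reverse_apply_eq_ite hw₀ hwI, cycle_apply_eq_ite hσ₁ hσ₂ hσ₃ hσ₄]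
  split_ifs <;> omega

/-- In the symmetric group `𝔖_n` (realized as permutations of `ℕ` supported on `{1,…,n}`,
with products composed as functions), the `(2r+1)`-cycle
`σ_{2r+1} = (1, n, 2, n−1, 3, …, n−r+1, r+1)` equals
`s₁ s₂ ⋯ s_r · w₀ · w_I` where `I = {r+1, …, n−1−r}`.
Here `s_i = (i, i+1)`, `w₀` is the longest element (`i ↦ n+1−i` on `{1,…,n}`), and
`w_I` is the longest element of the parabolic subgroup generated by `{s_i : i ∈ I}`,
i.e. the reversal `j ↦ n+1−j` of the interval `{r+1, …, n−r}`. -/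
theorem stmt4 (n r : ℕ) (hn : 1 ≤ n) (hr : 2 * r + 1 ≤ n)
    (σ w₀ wI : Equiv.Perm ℕ)
    (hw₀ : ∀ i : ℕ, (1 ≤ i ∧ i ≤ n → w₀ i = n + 1 - i) ∧ (¬(1 ≤ i ∧ i ≤ n) → w₀ i = i))
    (hwI : ∀ j : ℕ, (r + 1 ≤ j ∧ j ≤ n - r → wI j = n + 1 - j) ∧
      (¬(r + 1 ≤ j ∧ j ≤ n - r) → wI j = j))
    (hσ₁ : ∀ i : ℕ, 1 ≤ i → i ≤ r → σ i = n + 1 - i)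
    (hσ₂ : ∀ i : ℕ, 1 ≤ i → i ≤ r → σ (n + 1 - i) = i + 1)
    (hσ₃ : σ (r + 1) = 1)
    (hσ₄ : ∀ i : ℕ, ¬(1 ≤ i ∧ i ≤ r + 1) → ¬(n + 1 - r ≤ i ∧ i ≤ n) → σ i = i) :
    σ = ((List.range r).map fun i => Equiv.swap (i + 1) (i + 2)).prod * w₀ * wI :=
  stmt4_general n r hr σ w₀ wI hw₀ hwI hσ₁ hσ₂ hσ₃ hσ₄
end

section
/- Let n, i, j be natural numbers with n ≥ 3i. Then, as integers, Σ_{k=0}^{i} Σ_{r=0}^{k} (−1)^k · C(i,k) · C(k,r) · C(n−3k, j−3r) = 3^i · C(n−2i, j−i), where in any term the binomial coefficient C(a,b) is understood to be 0 whenever its lower index b is negative or exceeds a. -/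
/-- The binomial coefficient `C(a, b)` with integer lower index, with the convention
that it vanishes when `b < 0` (and also when `b > a`, as for `Nat.choose`). -/
def ibinom (a : ℕ) (b : ℤ) : ℤ := if 0 ≤ b then (a.choose b.toNat : ℤ) else 0

/-!
Both sides are the coefficient of `X ^ j` in the same polynomial. By the binomial theorem,
`∑ₖ (-1)ᵏ C(i,k) (1 + X³)ᵏ (1 + X)ⁿ⁻³ᵏ = ((1 + X)³ - (1 + X³))ⁱ (1 + X)ⁿ⁻³ⁱ`, and
`(1 + X)³ - (1 + X³) = 3X(1 + X)`, so this polynomial is `3ⁱ Xⁱ (1 + X)ⁿ⁻²ⁱ`. Expanding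
`(1 + X³)ᵏ` once more turns the coefficient of `X ^ j` on the left into the double sum.
-/

open Polynomial Finset

lemma coeff_one_add_X_pow_mul_X_pow (m a j : ℕ) :
    ((1 + X : ℤ[X]) ^ m * X ^ a).coeff j = ibinom m ((j : ℤ) - a) := by
  rw [coeff_mul_X_pow', ibinom]
  split_ifs
  · rw [coeff_one_add_X_pow]
    norm_cast
  · omega
  · omega
  · rfl

lemma coeff_one_add_X_pow_three_pow_mul (k m j : ℕ) :
    ((1 + X ^ 3 : ℤ[X]) ^ k * (1 + X) ^ m).coeff j
      = ∑ r ∈ range (k + 1), (k.choose r : ℤ) * ibinom m ((j : ℤ) - 3 * r) := by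
  rw [add_comm, add_pow, sum_mul, finsetSum_coeff]
  refine sum_congr rfl fun r _ => ?_
  rw [one_pow, mul_one, ← pow_mul, mul_comm, ← mul_assoc, mul_comm, coeff_natCast_mul,
    coeff_one_add_X_pow_mul_X_pow]
  push_cast
  rfl

lemma sum_neg_one_pow_mul_choose_mul_pow_mul_pow {R : Type*} [CommRing R] (x y : R) (i : ℕ) :
    ∑ k ∈ range (i + 1), (-1) ^ k * (i.choose k : R) * (x ^ k * y ^ (i - k)) = (y - x) ^ i := by
  rw [sub_eq_neg_add, add_pow]
  refine sum_congr rfl fun k _ => ?_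
  rw [neg_pow]
  ring

lemma one_add_X_pow_three_sub_one_add_X_pow_three {R : Type*} [CommRing R] :
    (1 + X : R[X]) ^ 3 - (1 + X ^ 3) = 3 * (X * (1 + X)) := by
  ring

lemma sum_neg_one_pow_mul_choose_mul_one_add_X_pow {R : Type*} [CommRing R] (n i : ℕ)
    (h : 3 * i ≤ n) :
    ∑ k ∈ range (i + 1),
        C ((-1) ^ k * (i.choose k : R)) * ((1 + X ^ 3) ^ k * (1 + X) ^ (n - 3 * k))
      = C (3 ^ i) * (X ^ i * (1 + X) ^ (n - 2 * i)) := by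
  have hsplit : ∀ k ∈ range (i + 1), C ((-1) ^ k * (i.choose k : R)) *
      ((1 + X ^ 3) ^ k * (1 + X) ^ (n - 3 * k))
        = (-1) ^ k * (i.choose k : R[X]) * ((1 + X ^ 3) ^ k * ((1 + X) ^ 3) ^ (i - k))
          * (1 + X) ^ (n - 3 * i) := by
    intro k hk
    rw [mem_range] at hk
    rw [show n - 3 * k = 3 * (i - k) + (n - 3 * i) by omega, pow_add, pow_mul]
    simp only [map_mul, map_pow, map_neg, map_one, map_natCast]
    ring
  rw [sum_congr rfl hsplit, ← sum_mul, sum_neg_one_pow_mul_choose_mul_pow_mul_pow,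
    one_add_X_pow_three_sub_one_add_X_pow_three, mul_pow, mul_pow, mul_assoc, mul_assoc,
    ← pow_add, show i + (n - 3 * i) = n - 2 * i by omega]
  simp only [map_pow, map_ofNat]

/-- For natural numbers `n, i, j` with `n ≥ 3i`:
`Σ_{k=0}^{i} Σ_{r=0}^{k} (−1)^k C(i,k) C(k,r) C(n−3k, j−3r) = 3^i C(n−2i, j−i)`. -/
theorem stmt9 (n i j : ℕ) (h : 3 * i ≤ n) :
    ∑ k ∈ Finset.range (i + 1), ∑ r ∈ Finset.range (k + 1),
        (-1 : ℤ) ^ k * (i.choose k : ℤ) * (k.choose r : ℤ) *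
          ibinom (n - 3 * k) ((j : ℤ) - 3 * (r : ℤ))
      = 3 ^ i * ibinom (n - 2 * i) ((j : ℤ) - (i : ℤ)) := by
  have hcoeff :=
    congrArg (coeff · j) (sum_neg_one_pow_mul_choose_mul_one_add_X_pow (R := ℤ) n i h)
  simp only [finsetSum_coeff, coeff_C_mul, coeff_one_add_X_pow_three_pow_mul, mul_sum,
    mul_comm (X ^ i : ℤ[X]), coeff_one_add_X_pow_mul_X_pow] at hcoeff
  rw [← hcoeff]
  refine sum_congr rfl fun k _ => sum_congr rfl fun r _ => ?_
  ring
end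

section
/- Let n, i, j be natural numbers with i ≤ j and n ≥ 3i. Then, as integers, Σ_{k=0}^{i} Σ_{r=0}^{k} (−1)^k · C(i,k) · C(k,r) · ( C(n−3k, j−3r) − C(n−3k, j−3r−1) ) = 3^i · ( C(n−2i, j−i) − C(n−2i, j−i−1) ), where in any term the binomial coefficient C(a,b) is understood to be 0 whenever its lower index b is negative or exceeds a. -/
/-!
Both sides are coefficients of `x ^ j` in polynomials multiplied by `1 - x`, since
`C(m, j) - C(m, j - 1)` is the coefficient of `x ^ j` in `(1 - x) (1 + x) ^ m`.
By the binomial theorem, the left-hand polynomial is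
`(1 + x) ^ (n - 3i) * ((1 + x) ^ 3 - (1 + x ^ 3)) ^ i`, and `(1 + x) ^ 3 - (1 + x ^ 3) = 3x (1 + x)`.
-/

open Polynomial Finset

namespace Polynomial

noncomputable def icoeff (R : Type*) [Semiring R] (t : ℤ) : R[X] →ₗ[R] R :=
  if 0 ≤ t then lcoeff R t.toNat else 0

variable {R : Type*}

theorem icoeff_X_pow_mul [Semiring R] (t : ℤ) (a : ℕ) (p : R[X]) :
    icoeff R t (X ^ a * p) = icoeff R (t - a) p := by
  unfold icoeff
  by_cases ht : 0 ≤ t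
  · by_cases hta : 0 ≤ t - a
    · rw [if_pos ht, if_pos hta, lcoeff_apply, lcoeff_apply, coeff_X_pow_mul',
        if_pos (by omega), show t.toNat - a = (t - a).toNat by omega]
    · rw [if_pos ht, if_neg hta, lcoeff_apply, coeff_X_pow_mul', if_neg (by omega),
        LinearMap.zero_apply]
  · rw [if_neg ht, if_neg (by omega), LinearMap.zero_apply, LinearMap.zero_apply]

theorem icoeff_one_sub_X_mul [Ring R] (t : ℤ) (p : R[X]) :
    icoeff R t ((1 - X) * p) = icoeff R t p - icoeff R (t - 1) p := by
  rw [sub_mul, one_mul, map_sub, ← pow_one (X : R[X]), icoeff_X_pow_mul, Nat.cast_one]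

end Polynomial

theorem ibinom_eq_icoeff (m : ℕ) (t : ℤ) : ibinom m t = icoeff ℤ t ((1 + X) ^ m) := by
  unfold ibinom icoeff
  split_ifs <;> simp [coeff_one_add_X_pow]

theorem icoeff_one_sub_X_mul_X_pow_mul_one_add_X_pow (t : ℤ) (a m : ℕ) :
    icoeff ℤ t ((1 - X) * (X ^ a * (1 + X) ^ m)) = ibinom m (t - a) - ibinom m (t - a - 1) := by
  rw [icoeff_one_sub_X_mul, icoeff_X_pow_mul, icoeff_X_pow_mul, ibinom_eq_icoeff,
    ibinom_eq_icoeff, sub_right_comm]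

theorem sum_sum_neg_one_pow_choose_mul_choose_smul {R : Type*} [CommRing R] (x : R)
    {i n : ℕ} (h : 3 * i ≤ n) :
    ∑ k ∈ range (i + 1), ∑ r ∈ range (k + 1),
        ((-1) ^ k * i.choose k * k.choose r : ℤ) • (x ^ (3 * r) * (1 + x) ^ (n - 3 * k))
      = (3 ^ i : ℤ) • (x ^ i * (1 + x) ^ (n - 2 * i)) := by
  have hterm : ∀ k ∈ range (i + 1), ∑ r ∈ range (k + 1),
      ((-1) ^ k * i.choose k * k.choose r : ℤ) • (x ^ (3 * r) * (1 + x) ^ (n - 3 * k))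
        = (1 + x) ^ (n - 3 * i) * ((-(1 + x ^ 3)) ^ k * ((1 + x) ^ 3) ^ (i - k) * i.choose k) := by
    intro k hk
    have hnk : n - 3 * k = n - 3 * i + 3 * (i - k) := by grind
    calc ∑ r ∈ range (k + 1),
          ((-1) ^ k * i.choose k * k.choose r : ℤ) • (x ^ (3 * r) * (1 + x) ^ (n - 3 * k))
        = (-1) ^ k * i.choose k * (1 + x) ^ (n - 3 * k) *
            ∑ r ∈ range (k + 1), (x ^ 3) ^ r * 1 ^ (k - r) * k.choose r := by
          rw [mul_sum]
          refine sum_congr rfl fun r _ ↦ ?_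
          simp only [zsmul_eq_mul, Int.cast_mul, Int.cast_pow, Int.cast_neg, Int.cast_one,
            Int.cast_natCast]
          ring
      _ = _ := by
          rw [← add_pow, hnk, pow_add, pow_mul, neg_pow (1 + x ^ 3)]
          ring
  calc _ = ∑ k ∈ range (i + 1),
        (1 + x) ^ (n - 3 * i) * ((-(1 + x ^ 3)) ^ k * ((1 + x) ^ 3) ^ (i - k) * i.choose k) :=
        sum_congr rfl hterm
    _ = (1 + x) ^ (n - 3 * i) * (3 * x * (1 + x)) ^ i := by
        rw [← mul_sum, ← add_pow]
        ring
    _ = _ := by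
        rw [show n - 2 * i = n - 3 * i + i by omega, zsmul_eq_mul, mul_pow, mul_pow, pow_add]
        push_cast
        ring

theorem stmt10_general (n i j : ℕ) (h : 3 * i ≤ n) :
    ∑ k ∈ Finset.range (i + 1), ∑ r ∈ Finset.range (k + 1),
        (-1 : ℤ) ^ k * (i.choose k : ℤ) * (k.choose r : ℤ) *
          (ibinom (n - 3 * k) ((j : ℤ) - 3 * (r : ℤ)) -
            ibinom (n - 3 * k) ((j : ℤ) - 3 * (r : ℤ) - 1))
      = 3 ^ i * (ibinom (n - 2 * i) ((j : ℤ) - (i : ℤ)) -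
          ibinom (n - 2 * i) ((j : ℤ) - (i : ℤ) - 1)) := by
  have hcoeff := congrArg (fun p ↦ icoeff ℤ j ((1 - X) * p))
    (sum_sum_neg_one_pow_choose_mul_choose_smul (X : ℤ[X]) h)
  simpa only [mul_sum, mul_smul_comm, map_sum, map_smul, smul_eq_mul,
    icoeff_one_sub_X_mul_X_pow_mul_one_add_X_pow, Nat.cast_mul, Nat.cast_ofNat] using hcoeff

/-- For natural numbers `n, i, j` with `i ≤ j` and `n ≥ 3i`:
`Σ_{k=0}^{i} Σ_{r=0}^{k} (−1)^k C(i,k) C(k,r) (C(n−3k, j−3r) − C(n−3k, j−3r−1))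
  = 3^i (C(n−2i, j−i) − C(n−2i, j−i−1))`. -/
theorem stmt10 (n i j : ℕ) (hij : i ≤ j) (h : 3 * i ≤ n) :
    ∑ k ∈ Finset.range (i + 1), ∑ r ∈ Finset.range (k + 1),
        (-1 : ℤ) ^ k * (i.choose k : ℤ) * (k.choose r : ℤ) *
          (ibinom (n - 3 * k) ((j : ℤ) - 3 * (r : ℤ)) -
            ibinom (n - 3 * k) ((j : ℤ) - 3 * (r : ℤ) - 1))
      = 3 ^ i * (ibinom (n - 2 * i) ((j : ℤ) - (i : ℤ)) -
          ibinom (n - 2 * i) ((j : ℤ) - (i : ℤ) - 1)) :=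
  stmt10_general n i j h
end

section
/- Let n be a natural number, set a = ⌊n/3⌋ + 1, and assume n ≥ 2a. Define integer square matrices C = (c_{i,j}) and D = (d_{i,j}) of size a+1, with rows and columns indexed by 0 ≤ i, j ≤ a, by: c_{i,j} = (−1)^{i+j} ( C(n−2i, j−i) − C(n−2i, j−i−1) ) for i ≤ j and c_{i,j} = 0 for i > j; and d_{i,j} = C(n−i−j, j−i) for i ≤ j and d_{i,j} = 0 for i > j; where C(a,b) = 0 whenever b < 0 or b > a. Then C is invertible and C⁻¹ = D, i.e. D·C = C·D = I. -/
open Finset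

theorem sum_antidiagonal_choose_mul_choose_add (N c J : ℕ) :
    ∑ p ∈ antidiagonal J, (-1 : ℤ) ^ p.2 * (N.choose p.1 * (c + p.2).choose p.2) =
      Ring.choose ((N : ℤ) - (c + 1)) J := by
  rw [sub_eq_add_neg, Ring.add_choose_eq J (Commute.all _ _)]
  refine sum_congr rfl fun p _ => ?_
  rw [Ring.choose_natCast, Ring.choose_neg, Int.negOnePow_def, Units.smul_def,
    show ((c : ℤ) + 1 + p.2 - 1) = ((c + p.2 : ℕ) : ℤ) by push_cast; ring,
    Ring.choose_natCast, zpow_natCast, Units.val_pow_eq_pow_val, Units.val_neg, Units.val_one]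
  ring

@[simp]
theorem ibinom_natCast (a b : ℕ) : ibinom a b = a.choose b := by
  simp [ibinom]

theorem ibinom_neg_one (a : ℕ) : ibinom a (-1) = 0 := by
  simp [ibinom]

theorem sum_antidiagonal_alternating_choose_sub_choose_mul_choose (c J : ℕ) :
    ∑ p ∈ antidiagonal J, (-1 : ℤ) ^ p.1 *
        ((ibinom (c + 2 * J) p.1 - ibinom (c + 2 * J) (p.1 - 1)) * (c + p.2).choose p.2) =
      if J = 0 then 1 else 0 := by
  rcases J with _ | J
  · simp [ibinom_neg_one]
  have hsign : ∀ p ∈ antidiagonal (J + 1), (-1 : ℤ) ^ p.1 = (-1) ^ (J + 1) * (-1) ^ p.2 := by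
    intro p hp
    rw [← mem_antidiagonal.mp hp, pow_add, mul_assoc, ← pow_add, ← two_mul, pow_mul]
    simp
  have hupper : ((c + 2 * (J + 1) : ℕ) : ℤ) - (c + 1) = ((2 * J + 1 : ℕ) : ℤ) := by
    push_cast; ring
  have hmain := sum_antidiagonal_choose_mul_choose_add (c + 2 * (J + 1)) c (J + 1)
  have hshift := sum_antidiagonal_choose_mul_choose_add (c + 2 * (J + 1)) c J
  rw [hupper, Ring.choose_natCast] at hmain hshift
  rw [sum_congr rfl fun p hp => by rw [hsign p hp, mul_assoc], ← mul_sum]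
  simp only [mul_sub, sub_mul, sum_sub_distrib, ibinom_natCast, hmain]
  rw [Nat.sum_antidiagonal_succ]
  simp [ibinom_neg_one, hshift, Nat.choose_symm_half]

def cEntry (n i j : ℕ) : ℤ :=
  if i ≤ j then
    (-1) ^ (i + j) * (ibinom (n - 2 * i) ((j : ℤ) - i) - ibinom (n - 2 * i) ((j : ℤ) - i - 1))
  else 0

def dEntry (n i j : ℕ) : ℤ :=
  if i ≤ j then ibinom (n - i - j) ((j : ℤ) - i) else 0

theorem cEntry_mul_dEntry_add (n i m l : ℕ) (hn : 2 * (i + m + l) ≤ n) :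
    cEntry n i (i + m) * dEntry n (i + m) (i + m + l) =
      (-1) ^ m * ((ibinom (n - 2 * (i + m + l) + 2 * (m + l)) m -
        ibinom (n - 2 * (i + m + l) + 2 * (m + l)) (m - 1)) *
          (n - 2 * (i + m + l) + l).choose l) := by
  have hN : n - 2 * (i + m + l) + 2 * (m + l) = n - 2 * i := by omega
  have hc : n - 2 * (i + m + l) + l = n - (i + m) - (i + m + l) := by omega
  have hsign : (-1 : ℤ) ^ (i + (i + m)) = (-1) ^ m := by
    rw [← add_assoc, ← two_mul, pow_add, pow_mul]; simp
  simp only [cEntry, dEntry, hN, hc, hsign, le_add_iff_nonneg_right, zero_le, if_true]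
  push_cast
  simp only [add_sub_cancel_left, ← ibinom_natCast]
  ring

theorem sum_range_cEntry_mul_dEntry (n b i j : ℕ) (hjb : j < b) (hjn : 2 * j ≤ n) :
    ∑ k ∈ range b, cEntry n i k * dEntry n k j = if i = j then 1 else 0 := by
  by_cases hij : i ≤ j
  swap
  · rw [if_neg (by omega)]
    refine sum_eq_zero fun k _ => ?_
    by_cases hik : i ≤ k
    · simp [dEntry, show ¬ k ≤ j by omega]
    · simp [cEntry, hik]
  obtain ⟨J, rfl⟩ := Nat.exists_eq_add_of_le hij
  calc ∑ k ∈ range b, cEntry n i k * dEntry n k (i + J)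
      = ∑ k ∈ Ico i (i + J + 1), cEntry n i k * dEntry n k (i + J) := by
        refine (sum_subset (fun k hk => ?_) fun k _ hk => ?_).symm
        · simp only [mem_Ico, mem_range] at hk ⊢; omega
        · simp only [mem_Ico, not_and_or, not_le, not_lt] at hk
          rcases hk with hk | hk
          · simp [cEntry, show ¬ i ≤ k by omega]
          · simp [dEntry, show ¬ k ≤ i + J by omega]
    _ = ∑ p ∈ antidiagonal J, cEntry n i (i + p.1) * dEntry n (i + p.1) (i + J) := by
        rw [sum_Ico_eq_sum_range, Nat.sum_antidiagonal_eq_sum_range_succ_mk,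
          show i + J + 1 - i = J + 1 by omega]
    _ = ∑ p ∈ antidiagonal J, (-1 : ℤ) ^ p.1 *
        ((ibinom (n - 2 * (i + J) + 2 * J) p.1 - ibinom (n - 2 * (i + J) + 2 * J) (p.1 - 1)) *
          (n - 2 * (i + J) + p.2).choose p.2) := by
        refine sum_congr rfl fun p hp => ?_
        have hJ : p.1 + p.2 = J := mem_antidiagonal.mp hp
        rw [← hJ, ← add_assoc, cEntry_mul_dEntry_add]
        omega
    _ = if i = i + J then 1 else 0 := by
        rw [sum_antidiagonal_alternating_choose_sub_choose_mul_choose]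
        simp

theorem stmt12_general (n a : ℕ) (hn : 2 * a ≤ n)
    (C D : Matrix (Fin (a + 1)) (Fin (a + 1)) ℤ)
    (hC : ∀ i j : Fin (a + 1), C i j =
      if (i : ℕ) ≤ (j : ℕ) then
        (-1) ^ ((i : ℕ) + (j : ℕ)) *
          (ibinom (n - 2 * (i : ℕ)) (((j : ℕ) : ℤ) - ((i : ℕ) : ℤ)) -
            ibinom (n - 2 * (i : ℕ)) (((j : ℕ) : ℤ) - ((i : ℕ) : ℤ) - 1))
      else 0)
    (hD : ∀ i j : Fin (a + 1), D i j =
      if (i : ℕ) ≤ (j : ℕ) then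
        ibinom (n - (i : ℕ) - (j : ℕ)) (((j : ℕ) : ℤ) - ((i : ℕ) : ℤ))
      else 0) :
    IsUnit C ∧ D * C = 1 ∧ C * D = 1 := by
  have hCD : C * D = 1 := by
    ext i j
    calc (C * D) i j = ∑ k ∈ range (a + 1), cEntry n i k * dEntry n k j := by
          rw [Matrix.mul_apply,
            ← Fin.sum_univ_eq_sum_range (fun k => cEntry n i k * dEntry n k j)]
          exact sum_congr rfl fun k _ => congrArg₂ (· * ·) (hC i k) (hD k j)
      _ = (1 : Matrix (Fin (a + 1)) (Fin (a + 1)) ℤ) i j := by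
          rw [sum_range_cEntry_mul_dEntry n _ i j j.isLt (by omega), Matrix.one_apply]
          simp only [Fin.val_inj]
  exact ⟨IsUnit.of_mul_eq_one D hCD, mul_eq_one_comm.mp hCD, hCD⟩

/-- Let `a = ⌊n/3⌋ + 1` with `n ≥ 2a`.  The matrix `C` with entries
`c_{i,j} = (−1)^{i+j}(C(n−2i, j−i) − C(n−2i, j−i−1))` for `i ≤ j` (zero otherwise)
is invertible with inverse the matrix `D` with entries `d_{i,j} = C(n−i−j, j−i)` for
`i ≤ j` (zero otherwise); indices run over `0 ≤ i, j ≤ a`. -/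
theorem stmt12 (n a : ℕ) (ha : a = n / 3 + 1) (hn : 2 * a ≤ n)
    (C D : Matrix (Fin (a + 1)) (Fin (a + 1)) ℤ)
    (hC : ∀ i j : Fin (a + 1), C i j =
      if (i : ℕ) ≤ (j : ℕ) then
        (-1) ^ ((i : ℕ) + (j : ℕ)) *
          (ibinom (n - 2 * (i : ℕ)) (((j : ℕ) : ℤ) - ((i : ℕ) : ℤ)) -
            ibinom (n - 2 * (i : ℕ)) (((j : ℕ) : ℤ) - ((i : ℕ) : ℤ) - 1))
      else 0)
    (hD : ∀ i j : Fin (a + 1), D i j =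
      if (i : ℕ) ≤ (j : ℕ) then
        ibinom (n - (i : ℕ) - (j : ℕ)) (((j : ℕ) : ℤ) - ((i : ℕ) : ℤ))
      else 0) :
    IsUnit C ∧ D * C = 1 ∧ C * D = 1 :=
  stmt12_general n a hn C D hC hD
end
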